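/- arXiv:2012.07249 — 4 statements merged into one kernel-verified Lean document; each statement's English description precedes it below -/
import Mathlib

section
/- For all integers n ≥ k ≥ 0, the (q,r)-Whitney-Lah numbers satisfy the vertical recurrence relation L_{m,r}[n+1,k+1]_q = Σ_{j=k}^{n} q^{2r+mk+mj} · (∏_{i=j+1}^{n} [2r+(k+1)m+im]_q) · L_{m,r}[j,k]_q, where the product over an empty index range equals 1. -/
/-! For fixed `k`, the column `n ↦ L[n, k+1]` obeys the first-order linear recurrence
`x (n+1) = q^(2r+mk+mn) L[n,k] + [2r+(k+1)m+nm]_q x n` with `x k = 0`; unrolling it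
(variation of constants) gives the sum. -/

open Finset

/-- The `q`-integer `[s]_q = (q^s - 1)/(q - 1)` for an integer `s`. -/
noncomputable def qint (q : ℝ) (s : ℤ) : ℝ := (q ^ s - 1) / (q - 1)

/-- The `(q,r)`-Whitney-Lah numbers `L_{m,r}[n,k]_q`, defined by `L[0,0] = 1`,
`L[n,k] = 0` for `k > n`, and the triangular recurrence
`L[n,k] = q^(2r+m(k-1)+m(n-1)) L[n-1,k-1] + [2r+km+(n-1)m]_q L[n-1,k]`. -/
noncomputable def qLah (q : ℝ) (m r : ℕ) : ℕ → ℕ → ℝ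
  | 0, 0 => 1
  | 0, _ + 1 => 0
  | n + 1, 0 => qint q (2 * r + n * m) * qLah q m r n 0
  | n + 1, k + 1 =>
      q ^ (2 * r + m * k + m * n) * qLah q m r n k
        + qint q (2 * r + (k + 1) * m + n * m) * qLah q m r n (k + 1)

theorem eq_sum_mul_prod_Icc_of_succ_eq_add_mul {R : Type*} [CommSemiring R]
    {x f g : ℕ → R} {k : ℕ} (h₀ : x k = 0) (hsucc : ∀ j ≥ k, x (j + 1) = f j + g j * x j)
    {n : ℕ} (hkn : k ≤ n) :
    x (n + 1) = ∑ j ∈ Icc k n, f j * ∏ i ∈ Icc (j + 1) n, g i := by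
  induction n, hkn using Nat.le_induction with
  | base => simp [hsucc k le_rfl, h₀]
  | succ n hkn ih =>
    rw [hsucc (n + 1) (by omega), ih, sum_Icc_succ_top (by omega),
      Icc_eq_empty_of_lt (Nat.lt_succ_self _), prod_empty, mul_one, add_comm, mul_sum]
    congr 1
    refine sum_congr rfl fun j hj ↦ ?_
    rw [prod_Icc_succ_top (by grind)]
    ring

theorem qLah_eq_zero_of_lt (q : ℝ) (m r : ℕ) {n k : ℕ} (h : n < k) : qLah q m r n k = 0 := by
  induction n generalizing k with
  | zero => obtain ⟨k, rfl⟩ := Nat.exists_eq_add_one_of_ne_zero h.ne'; rfl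
  | succ n ih =>
    obtain ⟨k, rfl⟩ := Nat.exists_eq_add_one_of_ne_zero (by omega : k ≠ 0)
    simp [qLah, ih (by omega : n < k), ih (by omega : n < k + 1)]

theorem qLah_vertical_recurrence_general (q : ℝ) (m r : ℕ)
    (n k : ℕ) (hkn : k ≤ n) :
    qLah q m r (n + 1) (k + 1) =
      ∑ j ∈ Finset.Icc k n,
        q ^ (2 * r + m * k + m * j) *
          (∏ i ∈ Finset.Icc (j + 1) n, qint q (2 * r + (k + 1) * m + i * m)) *
          qLah q m r j k := by
  simp only [mul_right_comm _ (∏ _ ∈ _, _)]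
  exact eq_sum_mul_prod_Icc_of_succ_eq_add_mul (x := fun n ↦ qLah q m r n (k + 1))
    (qLah_eq_zero_of_lt q m r (Nat.lt_succ_self k)) (fun _ _ ↦ rfl) hkn

theorem qLah_vertical_recurrence (q : ℝ) (hq : 0 < q) (hq1 : q ≠ 1) (m r : ℕ) (hm : 0 < m) (hr : 0 < r)
    (n k : ℕ) (hkn : k ≤ n) :
    qLah q m r (n + 1) (k + 1) =
      ∑ j ∈ Finset.Icc k n,
        q ^ (2 * r + m * k + m * j) *
          (∏ i ∈ Finset.Icc (j + 1) n, qint q (2 * r + (k + 1) * m + i * m)) *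
          qLah q m r j k :=
  qLah_vertical_recurrence_general q m r n k hkn
end

section
/- For all integers n ≥ k ≥ 0, the (q,r)-Whitney-Lah numbers satisfy the horizontal recurrence relation L_{m,r}[n,k]_q = Σ_{j=0}^{n−k} (−1)^j q^{−2r−m(k+j)−nm} · (∏_{h=k+1}^{k+j} q^{−(2r+mh+nm−m)} [2r+mh+nm]_q) · L_{m,r}[n+1,k+j+1]_q, where the product over an empty index range equals 1. -/
open Finset

/-! Solving the triangular recurrence `L[n+1,k+1] = q^a L[n,k] + [b]_q L[n,k+1]` for `L[n,k]`
(possible as `q ≠ 0`) expresses each entry of row `n` through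
row `n + 1` and the next entry of row `n`; unrolling this first-order recurrence in `k`
until it runs past the end of row `n` gives the alternating sum. -/

theorem eq_alternating_sum_of_eq_sub {R : Type*} [CommRing R] (x c y d : ℕ → R)
    (h : ∀ i, x i = c i * y i - d i * x (i + 1)) (k N : ℕ) :
    x k = ∑ j ∈ range N, (-1) ^ j * (∏ i ∈ range j, d (k + i)) * c (k + j) * y (k + j)
      + (-1) ^ N * (∏ i ∈ range N, d (k + i)) * x (k + N) := by
  induction N with
  | zero => simp
  | succ N ih =>
    rw [ih, h (k + N), sum_range_succ, prod_range_succ, ← add_assoc k N 1]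
    ring

theorem qLah_eq_sub (q : ℝ) (hq : q ≠ 0) (m r n k : ℕ) :
    qLah q m r n k =
      q ^ (-(2 * (r : ℤ) + m * k + n * m)) * qLah q m r (n + 1) (k + 1)
        - q ^ (-(2 * (r : ℤ) + m * k + n * m)) * qint q (2 * (r : ℤ) + m * (k + 1) + n * m)
            * qLah q m r n (k + 1) := by
  have hinv : q ^ (-(2 * (r : ℤ) + m * k + n * m)) * q ^ (2 * r + m * k + m * n) = 1 := by
    rw [← zpow_natCast, ← zpow_add₀ hq]
    push_cast
    ring_nf
    exact zpow_zero q
  rw [qLah, show (2 * r + (k + 1) * m + n * m : ℤ) = 2 * r + m * (k + 1) + n * m by ring]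
  linear_combination (-qLah q m r n k) * hinv

theorem qLah_horizontal_recurrence_general (q : ℝ) (hq : 0 < q) (m r : ℕ)
    (n k : ℕ) :
    qLah q m r n k =
      ∑ j ∈ Finset.range (n - k + 1),
        (-1 : ℝ) ^ j * q ^ (-(2 * (r : ℤ) + m * (k + j) + n * m)) *
          (∏ h ∈ Finset.Icc (k + 1) (k + j),
            q ^ (-(2 * (r : ℤ) + m * h + n * m - m)) * qint q (2 * (r : ℤ) + m * h + n * m)) *
          qLah q m r (n + 1) (k + j + 1) := by
  set c : ℕ → ℝ := fun i ↦ q ^ (-(2 * (r : ℤ) + m * i + n * m))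
  have unrolled := eq_alternating_sum_of_eq_sub (qLah q m r n) c (fun i ↦ qLah q m r (n + 1) (i + 1))
    (fun i ↦ c i * qint q (2 * (r : ℤ) + m * (i + 1) + n * m)) (qLah_eq_sub q hq.ne' m r n) k
    (n - k + 1)
  rw [unrolled, qLah_eq_zero_of_lt q m r (by omega), mul_zero, add_zero]
  refine sum_congr rfl fun j _ ↦ ?_
  have reindex : ∏ i ∈ range j, c (k + i) * qint q (2 * (r : ℤ) + m * ((k + i : ℕ) + 1) + n * m) =
      ∏ h ∈ Icc (k + 1) (k + j),
        q ^ (-(2 * (r : ℤ) + m * h + n * m - m)) * qint q (2 * (r : ℤ) + m * h + n * m) := by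
    rw [← Ico_add_one_right_eq_Icc, prod_Ico_eq_prod_range, show k + j + 1 - (k + 1) = j by omega]
    refine prod_congr rfl fun i _ ↦ ?_
    simp only [c]
    push_cast
    ring_nf
  rw [reindex]
  simp only [c]
  push_cast
  ring

theorem qLah_horizontal_recurrence (q : ℝ) (hq : 0 < q) (hq1 : q ≠ 1) (m r : ℕ) (hm : 0 < m) (hr : 0 < r)
    (n k : ℕ) (hkn : k ≤ n) :
    qLah q m r n k =
      ∑ j ∈ Finset.range (n - k + 1),
        (-1 : ℝ) ^ j * q ^ (-(2 * (r : ℤ) + m * (k + j) + n * m)) *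
          (∏ h ∈ Finset.Icc (k + 1) (k + j),
            q ^ (-(2 * (r : ℤ) + m * h + n * m - m)) * qint q (2 * (r : ℤ) + m * h + n * m)) *
          qLah q m r (n + 1) (k + j + 1) :=
  qLah_horizontal_recurrence_general q hq m r n k
end

section
/- For all integers n ≥ k ≥ 0, the (q,r)-Whitney-Lah numbers have the explicit formula L_{m,r}[n,k]_q = (1/([k]_{q^m}! · [m]_q^k)) · Σ_{j=0}^{k} (−1)^{k−j} q^{m·binom(k−j,2)} [k choose j]_{q^m} · ∏_{i=0}^{n−1} [2r+jm+im]_q. -/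
/-!
After multiplying by `[k]_{q^m}! [m]_q^k`, both sides satisfy the triangular recurrence of `qLah`
in `n`. For the sum this comes from `[a + (d+1)m]_q = q^a [d+1]_{q^m} [m]_q + [a]_q` with
`a = 2r + jm + nm` and `[j+d+1 choose j]_{q^m} [d+1]_{q^m} = [j+d choose j]_{q^m} [j+d+1]_{q^m}`.
At `n = 0` it is Gauss's identity `∑ (-1)^i q^{binom(i,2)} [k choose i]_q = 0` for `k > 0`, which
also makes both sides vanish when `k > n`.
-/

open Finset

/-- The `q`-factorial `[n]_q! = ∏_{i=1}^n [i]_q`. -/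
noncomputable def qfact (q : ℝ) : ℕ → ℝ
  | 0 => 1
  | n + 1 => qfact q n * qint q (n + 1)

/-- The `q`-binomial coefficient `[k choose j]_q`. -/
noncomputable def qbinom (q : ℝ) (k j : ℕ) : ℝ := qfact q k / (qfact q j * qfact q (k - j))

section QInteger

variable {q : ℝ}

theorem qint_add (hq0 : q ≠ 0) (hq1 : q ≠ 1) (a b : ℤ) :
    qint q (a + b) = q ^ a * qint q b + qint q a := by
  have hq1' : q - 1 ≠ 0 := sub_ne_zero.2 hq1
  simp only [qint, zpow_add₀ hq0]
  field_simp
  ring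

theorem qint_mul_natCast (hq1 : q ≠ 1) {m : ℕ} (hqm : q ^ m ≠ 1) (a : ℤ) :
    qint q (a * m) = qint (q ^ m) a * qint q m := by
  have hq1' : q - 1 ≠ 0 := sub_ne_zero.2 hq1
  have hqm' : q ^ m - 1 ≠ 0 := sub_ne_zero.2 hqm
  simp only [qint, mul_comm a, zpow_mul, zpow_natCast]
  field_simp

theorem qint_add_mul_natCast (hq0 : q ≠ 0) (hq1 : q ≠ 1) {m : ℕ} (hqm : q ^ m ≠ 1) (a b : ℤ) :
    qint q (a + b * m) = q ^ a * (qint (q ^ m) b * qint q m) + qint q a := by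
  rw [qint_add hq0 hq1, qint_mul_natCast hq1 hqm]

theorem qint_natCast_ne_zero (hq : 0 < q) (hq1 : q ≠ 1) {s : ℕ} (hs : s ≠ 0) :
    qint q s ≠ 0 := by
  rw [qint, zpow_natCast]
  exact div_ne_zero (sub_ne_zero.2 ((pow_eq_one_iff_of_nonneg hq.le hs).not.2 hq1))
    (sub_ne_zero.2 hq1)

theorem qfact_ne_zero (hq : 0 < q) (hq1 : q ≠ 1) (k : ℕ) : qfact q k ≠ 0 := by
  induction k with
  | zero => exact one_ne_zero
  | succ k ih => exact mul_ne_zero ih (mod_cast qint_natCast_ne_zero hq hq1 k.succ_ne_zero)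

end QInteger

section QBinomial

variable {q : ℝ}

theorem qbinom_symm {k j : ℕ} (h : j ≤ k) : qbinom q k (k - j) = qbinom q k j := by
  rw [qbinom, qbinom, Nat.sub_sub_self h, mul_comm]

theorem qbinom_zero_right (hq : 0 < q) (hq1 : q ≠ 1) (k : ℕ) : qbinom q k 0 = 1 := by
  rw [qbinom, Nat.sub_zero, qfact, one_mul, div_self (qfact_ne_zero hq hq1 k)]

theorem qbinom_self (hq : 0 < q) (hq1 : q ≠ 1) (k : ℕ) : qbinom q k k = 1 := by
  rw [qbinom, Nat.sub_self, qfact, mul_one, div_self (qfact_ne_zero hq hq1 k)]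

theorem qbinom_succ_succ (hq : 0 < q) (hq1 : q ≠ 1) {k j : ℕ} (h : j < k) :
    qbinom q (k + 1) (j + 1) = q ^ (j + 1) * qbinom q k (j + 1) + qbinom q k j := by
  obtain ⟨d, rfl⟩ := Nat.exists_eq_add_of_lt h
  have hsplit : qint q (↑(j + d + 1) + 1) = q ^ (j + 1) * qint q (↑d + 1) + qint q (↑j + 1) := by
    convert qint_add hq.ne' hq1 (j + 1) (d + 1) using 2
    · push_cast; ring
    · norm_cast
  simp only [qbinom, show j + d + 1 + 1 - (j + 1) = d + 1 by omega,
    show j + d + 1 - (j + 1) = d by omega, show j + d + 1 - j = d + 1 by omega, qfact, hsplit]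
  have := qfact_ne_zero hq hq1 j
  have := qfact_ne_zero hq hq1 d
  have : qint q (↑j + 1) ≠ 0 := mod_cast qint_natCast_ne_zero hq hq1 j.succ_ne_zero
  have : qint q (↑d + 1) ≠ 0 := mod_cast qint_natCast_ne_zero hq hq1 d.succ_ne_zero
  field_simp

theorem qbinom_succ_mul_qint (hq : 0 < q) (hq1 : q ≠ 1) (j d : ℕ) :
    qbinom q (j + d + 1) j * qint q (d + 1) = qbinom q (j + d) j * qint q (j + d + 1) := by
  simp only [qbinom, show j + d + 1 - j = d + 1 by omega, show j + d - j = d by omega, qfact]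
  have := qfact_ne_zero hq hq1 j
  have := qfact_ne_zero hq hq1 d
  have : qint q (↑d + 1) ≠ 0 := mod_cast qint_natCast_ne_zero hq hq1 d.succ_ne_zero
  push_cast
  field_simp

theorem alternating_sum_range_qbinom (hq : 0 < q) (hq1 : q ≠ 1) (t : ℕ) :
    ∑ i ∈ range (t + 2), (-1 : ℝ) ^ i * q ^ i.choose 2 * qbinom q (t + 1) i = 0 := by
  set h : ℕ → ℝ := fun i ↦ (-1 : ℝ) ^ i * q ^ (i.choose 2 + i) * qbinom q t i
  have hstep : ∀ i ∈ range t,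
      (-1 : ℝ) ^ (i + 1) * q ^ (i + 1).choose 2 * qbinom q (t + 1) (i + 1) = h (i + 1) - h i := by
    intro i hi
    rw [qbinom_succ_succ hq hq1 (mem_range.1 hi)]
    simp only [h, Nat.choose_succ_succ', Nat.choose_one_right, pow_add, pow_succ]
    ring
  rw [sum_range_succ, sum_range_succ', sum_congr rfl hstep, sum_range_sub]
  simp only [h, Nat.choose_succ_succ', Nat.choose_one_right, qbinom_zero_right hq hq1,
    qbinom_self hq hq1, pow_add]
  ring

end QBinomial

section WhitneyLah

variable {q : ℝ} {m r : ℕ}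

noncomputable def qLahSum (q : ℝ) (m r n k : ℕ) : ℝ :=
  ∑ j ∈ range (k + 1), (-1 : ℝ) ^ (k - j) * q ^ (m * (k - j).choose 2) * qbinom (q ^ m) k j *
    ∏ i ∈ range n, qint q (2 * r + j * m + i * m)

theorem qLahSum_zero_succ (hq : 0 < q) (hq1 : q ≠ 1) (hm : m ≠ 0) (k : ℕ) :
    qLahSum q m r 0 (k + 1) = 0 := by
  rw [← alternating_sum_range_qbinom (pow_pos hq m)
    ((pow_eq_one_iff_of_nonneg hq.le hm).not.2 hq1) k, ← sum_range_reflect, qLahSum]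
  refine sum_congr rfl fun j hj ↦ ?_
  have hjk : j ≤ k + 1 := Nat.lt_succ_iff.1 (mem_range.1 hj)
  rw [prod_range_zero, mul_one, show k + 2 - 1 - j = k + 1 - j by omega, qbinom_symm hjk, pow_mul]

theorem qLahSum_succ_zero (n : ℕ) :
    qLahSum q m r (n + 1) 0 = qint q (2 * r + n * m) * qLahSum q m r n 0 := by
  simp only [qLahSum, zero_add, sum_range_one, prod_range_succ, Nat.cast_zero, zero_mul, add_zero]
  ring

theorem qLahSum_succ_succ (hq : 0 < q) (hq1 : q ≠ 1) (hm : m ≠ 0) (n k : ℕ) :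
    qLahSum q m r (n + 1) (k + 1) =
      q ^ (2 * r + m * k + m * n) * (qint (q ^ m) (k + 1) * qint q m) * qLahSum q m r n k
        + qint q (2 * r + (k + 1) * m + n * m) * qLahSum q m r n (k + 1) := by
  rw [← sub_eq_iff_eq_add, qLahSum, qLahSum, qLahSum, mul_sum, mul_sum, ← sum_sub_distrib,
    sum_range_succ, prod_range_succ]
  have hlast : qint q (2 * r + ((k + 1 : ℕ) : ℤ) * m + n * m) =
      qint q (2 * r + (k + 1) * m + n * m) := by
    push_cast; rfl
  rw [hlast]
  refine (add_eq_left.2 (by ring)).trans (sum_congr rfl fun j hj ↦ ?_)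
  obtain ⟨d, rfl⟩ : ∃ d, k = j + d := ⟨k - j, by have := mem_range.1 hj; omega⟩
  have hQ1 : q ^ m ≠ 1 := (pow_eq_one_iff_of_nonneg hq.le hm).not.2 hq1
  have hsplit : qint q (2 * r + (↑(j + d) + 1) * m + n * m) =
      q ^ (2 * r + j * m + n * m) * (qint (q ^ m) (d + 1) * qint q m) +
        qint q (2 * r + j * m + n * m) := by
    rw [← zpow_natCast]
    push_cast
    convert qint_add_mul_natCast hq.ne' hq1 hQ1 (2 * r + j * m + n * m) (d + 1) using 2
    ring
  have hchoose : (d + 1).choose 2 = d.choose 2 + d := by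
    rw [Nat.choose_succ_succ', Nat.choose_one_right, add_comm]
  rw [prod_range_succ, hsplit, show j + d + 1 - j = d + 1 by omega, show j + d - j = d by omega,
    hchoose]
  push_cast
  linear_combination (-1 : ℝ) ^ d * q ^ (m * (d.choose 2 + d)) * q ^ (2 * r + j * m + n * m) *
    qint q m * (∏ i ∈ range n, qint q (2 * r + j * m + i * m)) *
    qbinom_succ_mul_qint (pow_pos hq m) hQ1 j d

theorem qLah_mul_eq_qLahSum (hq : 0 < q) (hq1 : q ≠ 1) (hm : m ≠ 0) (n k : ℕ) :
    qLah q m r n k * (qfact (q ^ m) k * qint q m ^ k) = qLahSum q m r n k := by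
  induction n generalizing k with
  | zero =>
    cases k with
    | zero => simp [qLah, qLahSum, qbinom, qfact]
    | succ k => rw [qLahSum_zero_succ hq hq1 hm, qLah, zero_mul]
  | succ n ih =>
    cases k with
    | zero =>
      rw [qLahSum_succ_zero, ← ih, qLah]
      ring
    | succ k =>
      rw [qLahSum_succ_succ hq hq1 hm, ← ih, ← ih, qLah, qfact, pow_succ]
      ring

end WhitneyLah

theorem qLah_explicit_formula_general (q : ℝ) (hq : 0 < q) (hq1 : q ≠ 1) (m r : ℕ) (hm : 0 < m)
    (n k : ℕ) :
    qLah q m r n k =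
      1 / (qfact (q ^ m) k * (qint q m) ^ k) *
        ∑ j ∈ Finset.range (k + 1),
          (-1 : ℝ) ^ (k - j) * q ^ (m * Nat.choose (k - j) 2) * qbinom (q ^ m) k j *
            ∏ i ∈ Finset.range n, qint q (2 * r + j * m + i * m) := by
  have hQ1 : q ^ m ≠ 1 := (pow_eq_one_iff_of_nonneg hq.le hm.ne').not.2 hq1
  have hD : qfact (q ^ m) k * qint q m ^ k ≠ 0 :=
    mul_ne_zero (qfact_ne_zero (pow_pos hq m) hQ1 k)
      (pow_ne_zero k (qint_natCast_ne_zero hq hq1 hm.ne'))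
  rw [one_div_mul_eq_div, eq_div_iff hD]
  exact qLah_mul_eq_qLahSum hq hq1 hm.ne' n k

theorem qLah_explicit_formula (q : ℝ) (hq : 0 < q) (hq1 : q ≠ 1) (m r : ℕ) (hm : 0 < m) (hr : 0 < r)
    (n k : ℕ) (hkn : k ≤ n) :
    qLah q m r n k =
      1 / (qfact (q ^ m) k * (qint q m) ^ k) *
        ∑ j ∈ Finset.range (k + 1),
          (-1 : ℝ) ^ (k - j) * q ^ (m * Nat.choose (k - j) 2) * qbinom (q ^ m) k j *
            ∏ i ∈ Finset.range n, qint q (2 * r + j * m + i * m) :=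
  qLah_explicit_formula_general q hq hq1 m r hm n k
end

section
/- The (q,r)-Whitney numbers of the first kind satisfy the triangular recurrence relation w_{m,r}[n+1,k]_q = q^{−(r+nm)} ( w_{m,r}[n,k−1]_q − [r+nm]_q · w_{m,r}[n,k]_q ) for all integers n ≥ 0 and 0 ≤ k ≤ n+1 (with the conventions w_{m,r}[n,−1]_q = 0 and w_{m,r}[n,k]_q = 0 for k > n), together with w_{m,r}[0,0]_q = 1 and w_{m,r}[n,0]_q = ∏_{i=0}^{n−1} (−q^{−(r+im)}[r+im]_q). -/
open Finset

namespace Polynomial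

variable {R : Type*} [CommRing R]

theorem coeff_eq_of_eval_eq_sum [IsDomain R] [Infinite R] {p : R[X]} {f : ℕ → R} {N : ℕ}
    (h : ∀ x, p.eval x = ∑ k ∈ range (N + 1), f k * x ^ k) (hf : ∀ k, N < k → f k = 0)
    (k : ℕ) : p.coeff k = f k := by
  have hp : p = ∑ j ∈ range (N + 1), C (f j) * X ^ j :=
    funext fun x => by simp [h, eval_finsetSum]
  rw [hp, finsetSum_coeff]
  simp only [coeff_C_mul_X_pow, sum_ite_eq, mem_range]
  split_ifs
  · rfl
  · exact (hf k (by omega)).symm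

theorem coeff_mul_C_mul_X_sub_C (p : R[X]) (a c : R) (k : ℕ) :
    (p * (C a * (X - C c))).coeff k =
      a * ((if k = 0 then 0 else p.coeff (k - 1)) - c * p.coeff k) := by
  rw [mul_left_comm, coeff_C_mul, mul_sub, coeff_sub, mul_comm p (C c), coeff_C_mul]
  cases k with
  | zero => simp
  | succ k => simp [coeff_mul_X]

end Polynomial

open Polynomial in
theorem qWhitney1_triangular_recurrence_general (q : ℝ) (m r : ℕ)
    (w : ℕ → ℕ → ℝ)
    (hw : ∀ (n : ℕ) (x : ℝ),
      ∏ i ∈ Finset.range n, (q ^ (-((r : ℤ) + i * m)) * (x - qint q ((r : ℤ) + i * m))) =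
        ∑ k ∈ Finset.range (n + 1), w n k * x ^ k)
    (hw0 : ∀ n k : ℕ, n < k → w n k = 0) :
    (∀ (n k : ℕ), k ≤ n + 1 →
        w (n + 1) k =
          q ^ (-((r : ℤ) + n * m)) *
            ((if k = 0 then 0 else w n (k - 1)) - qint q ((r : ℤ) + n * m) * w n k)) ∧
      w 0 0 = 1 ∧
      ∀ n : ℕ, w n 0 =
        ∏ i ∈ Finset.range n, (-(q ^ (-((r : ℤ) + i * m)) * qint q ((r : ℤ) + i * m))) := by
  set P : ℕ → ℝ[X] := fun n =>
    ∏ i ∈ range n, C (q ^ (-((r : ℤ) + i * m))) * (X - C (qint q ((r : ℤ) + i * m))) with hP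
  have hcoeff : ∀ n k, (P n).coeff k = w n k := fun n =>
    coeff_eq_of_eval_eq_sum
      (fun x => by simp only [hP, eval_prod, eval_mul, eval_C, eval_sub, eval_X, hw]) (hw0 n)
  refine ⟨fun n k _ => ?_, by simpa using (hw 0 0).symm, fun n => ?_⟩
  · simp only [← hcoeff, hP, prod_range_succ, coeff_mul_C_mul_X_sub_C]
  · rw [← hcoeff, coeff_zero_eq_eval_zero, hP, eval_prod]
    simp

theorem qWhitney1_triangular_recurrence (q : ℝ) (hq : 0 < q) (hq1 : q ≠ 1) (m r : ℕ) (hm : 0 < m) (hr : 0 < r)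
    (w : ℕ → ℕ → ℝ)
    (hw : ∀ (n : ℕ) (x : ℝ),
      ∏ i ∈ Finset.range n, (q ^ (-((r : ℤ) + i * m)) * (x - qint q ((r : ℤ) + i * m))) =
        ∑ k ∈ Finset.range (n + 1), w n k * x ^ k)
    (hw0 : ∀ n k : ℕ, n < k → w n k = 0) :
    (∀ (n k : ℕ), k ≤ n + 1 →
        w (n + 1) k =
          q ^ (-((r : ℤ) + n * m)) *
            ((if k = 0 then 0 else w n (k - 1)) - qint q ((r : ℤ) + n * m) * w n k)) ∧
      w 0 0 = 1 ∧
      ∀ n : ℕ, w n 0 =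
        ∏ i ∈ Finset.range n, (-(q ^ (-((r : ℤ) + i * m)) * qint q ((r : ℤ) + i * m))) :=
  qWhitney1_triangular_recurrence_general q m r w hw hw0
end
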